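/- arXiv:2304.03354 — 2 statements merged into one kernel-verified Lean document; each statement's English description precedes it below -/
import Mathlib

section
/- Let X, Y be finite sets with |X| = ℓ ≥ 2, |Y| = n ≥ 2, and let ℐ_⊥ = {A × B : A ⊆ X, B ⊆ Y} be the family of rectangles. Then DD(ℐ_⊥) = CD(ℐ_⊥) = (2^ℓ − ℓ − 1)(2^n − n − 1) + ℓ + n and DDd(ℐ_⊥) = (2^ℓ − ℓ − 1)(2^n − n − 1) + 1. -/
open Set

/-- A family of sets is convex if it is closed under set-theoretic betweenness. -/
def IsConvexFam {X : Type*} (𝒜 : Set (Set X)) : Prop :=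
  ∀ S ∈ 𝒜, ∀ T ∈ 𝒜, ∀ C : Set X, S ⊆ C → C ⊆ T → C ∈ 𝒜

/-- A family is dominated if its union belongs to it. -/
def IsDominatedFam {X : Type*} (𝒜 : Set (Set X)) : Prop := ⋃₀ 𝒜 ∈ 𝒜

/-- A family is supported if it is nonempty and its intersection belongs to it. -/
def IsSupportedFam {X : Type*} (𝒜 : Set (Set X)) : Prop := 𝒜.Nonempty ∧ ⋂₀ 𝒜 ∈ 𝒜

/-- A family is an interval if it equals `[A,B] = {C | A ⊆ C ⊆ B}` for some `A ⊆ B`. -/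
def IsIntervalFam {X : Type*} (𝒜 : Set (Set X)) : Prop :=
  ∃ A B : Set X, A ⊆ B ∧ 𝒜 = Set.Icc A B

/-- `𝒢` dominates `𝒜` if there are dominated convex families `𝒟 G ⊆ 𝒜` (`G ∈ 𝒢`)
with `⋃ G ∈ 𝒢, 𝒟 G = 𝒜` and `⋃₀ (𝒟 G) = G`. -/
def DominatesFam {X : Type*} (𝒢 𝒜 : Set (Set X)) : Prop :=
  𝒢 ⊆ 𝒜 ∧ ∃ 𝒟 : Set X → Set (Set X),
    (∀ G ∈ 𝒢, 𝒟 G ⊆ 𝒜 ∧ IsConvexFam (𝒟 G) ∧ IsDominatedFam (𝒟 G) ∧ ⋃₀ (𝒟 G) = G) ∧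
    (⋃ G ∈ 𝒢, 𝒟 G) = 𝒜

/-- `𝒦` supports `𝒜` if there are supported convex families `𝒮 K ⊆ 𝒜` (`K ∈ 𝒦`)
with `⋃ K ∈ 𝒦, 𝒮 K = 𝒜` and `⋂₀ (𝒮 K) = K`. -/
def SupportsFam {X : Type*} (𝒦 𝒜 : Set (Set X)) : Prop :=
  𝒦 ⊆ 𝒜 ∧ ∃ 𝒮 : Set X → Set (Set X),
    (∀ K ∈ 𝒦, 𝒮 K ⊆ 𝒜 ∧ IsConvexFam (𝒮 K) ∧ IsSupportedFam (𝒮 K) ∧ ⋂₀ (𝒮 K) = K) ∧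
    (⋃ K ∈ 𝒦, 𝒮 K) = 𝒜

/-- The upper dimension: the minimal cardinality of a dominating subfamily. -/
noncomputable def upperDim {X : Type*} (𝒜 : Set (Set X)) : ℕ∞ :=
  sInf {n : ℕ∞ | ∃ 𝒢 : Set (Set X), DominatesFam 𝒢 𝒜 ∧ 𝒢.encard = n}

/-- The dual upper dimension: the minimal cardinality of a supporting subfamily. -/
noncomputable def dualDim {X : Type*} (𝒜 : Set (Set X)) : ℕ∞ :=
  sInf {n : ℕ∞ | ∃ 𝒦 : Set (Set X), SupportsFam 𝒦 𝒜 ∧ 𝒦.encard = n}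

/-- The cylindrical dimension: the minimal number of intervals whose union is `𝒜`. -/
noncomputable def cylDim {X : Type*} (𝒜 : Set (Set X)) : ℕ∞ :=
  sInf {n : ℕ∞ | ∃ 𝕀 : Set (Set (Set X)),
    (∀ J ∈ 𝕀, IsIntervalFam J) ∧ ⋃₀ 𝕀 = 𝒜 ∧ 𝕀.encard = n}

open Classical in
noncomputable def chiFun {X : Type*} (A : Set X) (x : X) : Bool := decide (x ∈ A)

/-- The set-theoretic operation corresponding to a binary operation on `{0,1}`. -/
noncomputable def setOp {X : Type*} (op : Bool → Bool → Bool) (A B : Set X) : Set X :=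
  {x | op (chiFun A x) (chiFun B x) = true}

/-- The tensor operation on families corresponding to a binary operation on `{0,1}`. -/
noncomputable def tensorFam {X : Type*} (op : Bool → Bool → Bool)
    (𝒜 ℬ : Set (Set X)) : Set (Set X) :=
  Set.image2 (setOp op) 𝒜 ℬ

/-- The convex shadow of `A` in `𝒜`. -/
def convexShadow {X : Type*} (𝒜 : Set (Set X)) (A : Set X) : Set (Set X) :=
  {B | B ⊆ A ∧ Set.Icc B A ⊆ 𝒜}

/-- Domain of a relation. -/
def relDom {X Y : Type*} (R : Set (X × Y)) : Set X := {x | ∃ y, (x, y) ∈ R}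

/-- Range of a relation. -/
def relRg {X Y : Type*} (R : Set (X × Y)) : Set Y := {y | ∃ x, (x, y) ∈ R}

/-- The family of (partial) functions from `X` to `Y`, as sets of pairs. -/
def partialFunFam (X Y : Type*) : Set (Set (X × Y)) :=
  {f | ∀ x y y', (x, y) ∈ f → (x, y') ∈ f → y = y'}

/-- The family of relations on `X` with disjoint domain and range. -/
def exclFam (X : Type*) : Set (Set (X × X)) :=
  {R | relDom R ∩ relRg R = ∅}

/-- The family of relations on `X` whose domain is included in their range. -/
def inclFam (X : Type*) : Set (Set (X × X)) :=
  {R | relDom R ⊆ relRg R}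

/-- The family of anonymous relations: every point of the domain has two distinct images. -/
def anonFam (X Y : Type*) : Set (Set (X × Y)) :=
  {R | ∀ x ∈ relDom R, ∃ y y' : Y, y ≠ y' ∧ (x, y) ∈ R ∧ (x, y') ∈ R}

/-- The family of rectangles `A × B`. -/
def rectFam (X Y : Type*) : Set (Set (X × Y)) :=
  {P | ∃ (A : Set X) (B : Set Y), P = A ×ˢ B}

/-- General tensor disjunction of an indexed family of families of sets. -/
def gTensorDisj {ι X : Type*} (𝒜 : ι → Set (Set X)) : Set (Set X) :=
  {U | ∃ f : ι → Set X, (∀ i, f i ∈ 𝒜 i) ∧ U = ⋃ i, f i}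

/-- The Kripke operator associated to a relation `ℛ ⊆ 𝒫(Y) × 𝒫(X)^n`. -/
def kripkeOp {X Y : Type*} {n : ℕ} (ℛ : Set (Set Y × (Fin n → Set X)))
    (𝒜 : Fin n → Set (Set X)) : Set (Set Y) :=
  {B | ∃ A : Fin n → Set X, (∀ i, A i ∈ 𝒜 i) ∧ (B, A) ∈ ℛ}

/-!
Call a rectangle *fat* if both of its sides have at least two points, and call the rows
`{x} ×ˢ univ` and the columns `univ ×ˢ {y}` *lines*. A rectangle that is not fat lies in a
line, and every subset of a line is a rectangle.

Adding a point to a fat rectangle or to a line never gives a rectangle, so each of them is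
the top of every interval of rectangles containing it; hence all of them belong to every
dominating family. Conversely the intervals `{R}` (`R` fat) and `[∅, L]` (`L` a line) cover
all rectangles, and `DD ≤ CD` holds in general.
Dually, removing a point from a fat rectangle never gives a rectangle, so `∅` and the fat
rectangles belong to every supporting family; they suffice because the non-fat rectangles
form a down-closed family, supported by `∅`. There are `(2^ℓ - ℓ - 1)(2^n - n - 1)` fat
rectangles and `ℓ + n` lines.
-/

section IntervalDimensions

variable {α : Type*} {𝒜 : Set (Set α)}

def IsUpperRigid (𝒜 : Set (Set α)) (R : Set α) : Prop :=
  ∀ G, R ⊆ G → Icc R G ⊆ 𝒜 → G = R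

def IsLowerRigid (𝒜 : Set (Set α)) (R : Set α) : Prop :=
  ∀ K, K ⊆ R → Icc K R ⊆ 𝒜 → K = R

lemma isUpperRigid_of_forall_insert {R : Set α} (h : ∀ p ∉ R, insert p R ∉ 𝒜) :
    IsUpperRigid 𝒜 R := by
  intro G hRG hIcc
  by_contra hne
  obtain ⟨p, hpG, hpR⟩ := exists_of_ssubset (hRG.ssubset_of_ne (Ne.symm hne))
  exact h p hpR (hIcc ⟨subset_insert p R, insert_subset hpG hRG⟩)

lemma isLowerRigid_of_forall_diff_singleton {R : Set α} (h : ∀ p ∈ R, R \ {p} ∉ 𝒜) :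
    IsLowerRigid 𝒜 R := by
  intro K hKR hIcc
  by_contra hne
  obtain ⟨p, hpR, hpK⟩ := exists_of_ssubset (hKR.ssubset_of_ne hne)
  exact h p hpR (hIcc ⟨subset_sdiff_singleton hKR hpK, sdiff_subset⟩)

lemma isLowerRigid_empty : IsLowerRigid 𝒜 ∅ :=
  fun _ hK _ => subset_empty_iff.mp hK

lemma sUnion_Icc {A B : Set α} (h : A ⊆ B) : ⋃₀ Icc A B = B :=
  subset_antisymm (sUnion_subset fun _ hC => hC.2) (subset_sUnion_of_mem ⟨h, subset_rfl⟩)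

lemma isConvexFam_singleton (A : Set α) : IsConvexFam {A} := by
  rintro S rfl T rfl C hSC hCT
  exact subset_antisymm hCT hSC

lemma DominatesFam.mem_of_isUpperRigid {𝒢 : Set (Set α)} (h : DominatesFam 𝒢 𝒜)
    {R : Set α} (hR : R ∈ 𝒜) (hrigid : IsUpperRigid 𝒜 R) : R ∈ 𝒢 := by
  obtain ⟨-, 𝒟, h𝒟, hcover⟩ := h
  obtain ⟨G, hG, hRG⟩ := mem_iUnion₂.mp (hcover.symm ▸ hR)
  obtain ⟨h𝒟𝒜, hconvex, hdom, hunion⟩ := h𝒟 G hG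
  have hGG : G ∈ 𝒟 G := by rwa [IsDominatedFam, hunion] at hdom
  have hGR : G = R := hrigid G (hunion ▸ subset_sUnion_of_mem hRG)
    fun C hC => h𝒟𝒜 (hconvex R hRG G hGG C hC.1 hC.2)
  exact hGR ▸ hG

lemma SupportsFam.mem_of_isLowerRigid {𝒦 : Set (Set α)} (h : SupportsFam 𝒦 𝒜)
    {R : Set α} (hR : R ∈ 𝒜) (hrigid : IsLowerRigid 𝒜 R) : R ∈ 𝒦 := by
  obtain ⟨-, 𝒮, h𝒮, hcover⟩ := h
  obtain ⟨K, hK, hRK⟩ := mem_iUnion₂.mp (hcover.symm ▸ hR)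
  obtain ⟨h𝒮𝒜, hconvex, hsupp, hinter⟩ := h𝒮 K hK
  have hKK : K ∈ 𝒮 K := by rw [IsSupportedFam, hinter] at hsupp; exact hsupp.2
  have hKR : K = R := hrigid K (hinter ▸ sInter_subset_of_mem hRK)
    fun C hC => h𝒮𝒜 (hconvex K hKK R hRK C hC.1 hC.2)
  exact hKR ▸ hK

lemma encard_le_upperDim {ℛ : Set (Set α)} (hℛ : ℛ ⊆ 𝒜)
    (hrigid : ∀ R ∈ ℛ, IsUpperRigid 𝒜 R) : ℛ.encard ≤ upperDim 𝒜 :=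
  le_sInf fun _ ⟨_, h𝒢, hcard⟩ =>
    hcard ▸ encard_le_encard fun R hR => h𝒢.mem_of_isUpperRigid (hℛ hR) (hrigid R hR)

lemma encard_le_dualDim {ℛ : Set (Set α)} (hℛ : ℛ ⊆ 𝒜)
    (hrigid : ∀ R ∈ ℛ, IsLowerRigid 𝒜 R) : ℛ.encard ≤ dualDim 𝒜 :=
  le_sInf fun _ ⟨_, h𝒦, hcard⟩ =>
    hcard ▸ encard_le_encard fun R hR => h𝒦.mem_of_isLowerRigid (hℛ hR) (hrigid R hR)

lemma IsIntervalFam.sUnion_mem {J : Set (Set α)} (hJ : IsIntervalFam J) : ⋃₀ J ∈ J := by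
  obtain ⟨A, B, hAB, rfl⟩ := hJ
  rw [sUnion_Icc hAB]
  exact ⟨hAB, subset_rfl⟩

lemma dominatesFam_image_sUnion {𝕀 : Set (Set (Set α))} (hint : ∀ J ∈ 𝕀, IsIntervalFam J)
    (hcover : ⋃₀ 𝕀 = 𝒜) : DominatesFam ((⋃₀ ·) '' 𝕀) 𝒜 := by
  have hJ𝒜 : ∀ J ∈ 𝕀, J ⊆ 𝒜 := fun J hJ => hcover ▸ subset_sUnion_of_mem hJ
  -- the intervals of the cover with top `G` form a convex family dominated by `G`
  let 𝒟 : Set α → Set (Set α) := fun G => {C | ∃ J ∈ 𝕀, ⋃₀ J = G ∧ C ∈ J}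
  refine ⟨?_, 𝒟, ?_, ?_⟩
  · rintro _ ⟨J, hJ, rfl⟩
    exact hJ𝒜 J hJ (hint J hJ).sUnion_mem
  · rintro _ ⟨J₀, hJ₀, rfl⟩
    have hunion : ⋃₀ 𝒟 (⋃₀ J₀) = ⋃₀ J₀ := by
      refine subset_antisymm (sUnion_subset ?_) (sUnion_subset fun C hC => ?_)
      · rintro C ⟨J, -, hJJ₀, hCJ⟩
        exact hJJ₀ ▸ subset_sUnion_of_mem hCJ
      · exact subset_sUnion_of_mem (show C ∈ 𝒟 (⋃₀ J₀) from ⟨J₀, hJ₀, rfl, hC⟩)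
    refine ⟨fun C ⟨J, hJ, _, hCJ⟩ => hJ𝒜 J hJ hCJ, ?_, ?_, hunion⟩
    · rintro S ⟨J, hJ, hJtop, hSJ⟩ T ⟨J', -, hJ'top, hTJ'⟩ C hSC hCT
      refine ⟨J, hJ, hJtop, ?_⟩
      obtain ⟨A, B, hAB, rfl⟩ := hint J hJ
      refine ⟨hSJ.1.trans hSC, ?_⟩
      rw [← sUnion_Icc hAB, hJtop, ← hJ'top]
      exact hCT.trans (subset_sUnion_of_mem hTJ')
    · show ⋃₀ 𝒟 (⋃₀ J₀) ∈ 𝒟 (⋃₀ J₀)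
      rw [hunion]
      exact ⟨J₀, hJ₀, rfl, (hint J₀ hJ₀).sUnion_mem⟩
  · refine subset_antisymm (iUnion₂_subset fun _ _ C ⟨J, hJ, _, hCJ⟩ => hJ𝒜 J hJ hCJ)
      fun C hC => ?_
    obtain ⟨J, hJ, hCJ⟩ := hcover.symm ▸ hC
    exact mem_iUnion₂.mpr ⟨⋃₀ J, ⟨J, hJ, rfl⟩, J, hJ, rfl, hCJ⟩

lemma upperDim_le_cylDim : upperDim 𝒜 ≤ cylDim 𝒜 :=
  le_sInf fun _ ⟨_, hint, hcover, hcard⟩ =>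
    sInf_le_of_le ⟨_, dominatesFam_image_sUnion hint hcover, rfl⟩ (hcard ▸ encard_image_le _ _)

lemma dualDim_le_encard_insert_empty {𝒦 : Set (Set α)} (h𝒦 : 𝒦 ⊆ 𝒜)
    (hempty : ∅ ∈ 𝒜 \ 𝒦) (hdown : ∀ S ∈ 𝒜 \ 𝒦, ∀ C ⊆ S, C ∈ 𝒜 \ 𝒦) :
    dualDim 𝒜 ≤ (insert ∅ 𝒦).encard := by
  classical
  -- `∅` supports every set outside `𝒦`, and each member of `𝒦` supports itself
  let 𝒮 : Set α → Set (Set α) := fun K => if K ∈ 𝒦 then {K} else 𝒜 \ 𝒦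
  have h𝒮 : ∀ K ∈ insert ∅ 𝒦,
      𝒮 K ⊆ 𝒜 ∧ IsConvexFam (𝒮 K) ∧ IsSupportedFam (𝒮 K) ∧ ⋂₀ 𝒮 K = K := by
    rintro K (rfl | hK)
    · have hinter : ⋂₀ (𝒜 \ 𝒦) = ∅ := subset_empty_iff.mp (sInter_subset_of_mem hempty)
      rw [show 𝒮 ∅ = 𝒜 \ 𝒦 from if_neg hempty.2, hinter]
      exact ⟨sdiff_subset, fun S _ T hT C _ hCT => hdown T hT C hCT,
        ⟨⟨_, hempty⟩, by rwa [hinter]⟩, rfl⟩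
    · rw [show 𝒮 K = {K} from if_pos hK]
      exact ⟨singleton_subset_iff.mpr (h𝒦 hK), isConvexFam_singleton K,
        ⟨singleton_nonempty K, by rw [sInter_singleton]; rfl⟩, sInter_singleton K⟩
  refine sInf_le ⟨insert ∅ 𝒦, ⟨insert_subset hempty.1 h𝒦, 𝒮, h𝒮, ?_⟩, rfl⟩
  refine subset_antisymm (iUnion₂_subset fun K hK => (h𝒮 K hK).1) fun A hA => ?_
  by_cases hA𝒦 : A ∈ 𝒦
  · exact mem_iUnion₂.mpr ⟨A, mem_insert_of_mem ∅ hA𝒦, by simp [𝒮, hA𝒦]⟩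
  · exact mem_iUnion₂.mpr ⟨∅, mem_insert ∅ 𝒦, by simp [𝒮, hempty.2, hA, hA𝒦]⟩

end IntervalDimensions

section Rectangles

variable {X Y : Type*}

def fatFam (X Y : Type*) : Set (Set (X × Y)) :=
  image2 (· ×ˢ ·) {A : Set X | A.Nontrivial} {B : Set Y | B.Nontrivial}

def lineFam (X Y : Type*) : Set (Set (X × Y)) :=
  range (fun x : X => {x} ×ˢ (univ : Set Y)) ∪ range (fun y : Y => (univ : Set X) ×ˢ {y})

lemma mem_rectFam_iff {P : Set (X × Y)} :
    P ∈ rectFam X Y ↔ ∀ p ∈ P, ∀ q ∈ P, (p.1, q.2) ∈ P := by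
  constructor
  · rintro ⟨A, B, rfl⟩ p hp q hq
    exact ⟨hp.1, hq.2⟩
  · intro h
    refine ⟨Prod.fst '' P, Prod.snd '' P, ?_⟩
    ext ⟨a, b⟩
    constructor
    · intro hab
      exact ⟨⟨_, hab, rfl⟩, ⟨_, hab, rfl⟩⟩
    · rintro ⟨⟨p, hp, rfl⟩, ⟨q, hq, rfl⟩⟩
      exact h p hp q hq

lemma empty_mem_rectFam : (∅ : Set (X × Y)) ∈ rectFam X Y :=
  ⟨∅, ∅, (empty_prod).symm⟩

lemma empty_notMem_fatFam : (∅ : Set (X × Y)) ∉ fatFam X Y := by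
  rintro ⟨A, hA, B, hB, h⟩
  exact (hA.nonempty.prod hB.nonempty).ne_empty h

lemma fatFam_subset_rectFam : fatFam X Y ⊆ rectFam X Y := by
  rintro _ ⟨A, -, B, -, rfl⟩
  exact ⟨A, B, rfl⟩

lemma mem_rectFam_of_subset_line {L C : Set (X × Y)} (hL : L ∈ lineFam X Y) (hC : C ⊆ L) :
    C ∈ rectFam X Y := by
  refine mem_rectFam_iff.mpr fun p hp q hq => ?_
  rcases hL with ⟨x, rfl⟩ | ⟨y, rfl⟩
  · rwa [show (p.1, q.2) = q from Prod.ext ((hC hp).1.trans (hC hq).1.symm) rfl]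
  · rwa [show (p.1, q.2) = p from Prod.ext rfl ((hC hq).2.trans (hC hp).2.symm)]

lemma lineFam_subset_rectFam : lineFam X Y ⊆ rectFam X Y :=
  fun _ hL => mem_rectFam_of_subset_line hL subset_rfl

lemma not_subset_line_of_mem_fatFam {R L : Set (X × Y)} (hR : R ∈ fatFam X Y)
    (hL : L ∈ lineFam X Y) : ¬ R ⊆ L := by
  obtain ⟨A, hA, B, hB, rfl⟩ := hR
  intro hRL
  rcases hL with ⟨x, rfl⟩ | ⟨y, rfl⟩
  · obtain ⟨a, ha, a', ha', hne⟩ := hA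
    obtain ⟨b, hb⟩ := hB.nonempty
    exact hne ((hRL (mk_mem_prod ha hb)).1.trans (hRL (mk_mem_prod ha' hb)).1.symm)
  · obtain ⟨b, hb, b', hb', hne⟩ := hB
    obtain ⟨a, ha⟩ := hA.nonempty
    exact hne ((hRL (mk_mem_prod ha hb)).2.trans (hRL (mk_mem_prod ha hb')).2.symm)

lemma disjoint_fatFam_lineFam : Disjoint (fatFam X Y) (lineFam X Y) :=
  disjoint_left.mpr fun _ hR hL => not_subset_line_of_mem_fatFam hR hL subset_rfl

lemma mem_fatFam_or_exists_line [Nonempty X] {P : Set (X × Y)} (hP : P ∈ rectFam X Y) :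
    P ∈ fatFam X Y ∨ ∃ L ∈ lineFam X Y, P ⊆ L := by
  obtain ⟨A, B, rfl⟩ := hP
  by_cases hfat : A.Nontrivial ∧ B.Nontrivial
  · exact Or.inl ⟨A, hfat.1, B, hfat.2, rfl⟩
  right
  rcases not_and_or.mp hfat with hA | hB
  · rcases (not_nontrivial_iff.mp hA).eq_empty_or_singleton with rfl | ⟨x, rfl⟩
    · exact ⟨_, Or.inl ⟨Classical.arbitrary X, rfl⟩, by simp⟩
    · exact ⟨_, Or.inl ⟨x, rfl⟩, prod_mono subset_rfl (subset_univ B)⟩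
  · rcases (not_nontrivial_iff.mp hB).eq_empty_or_singleton with rfl | ⟨y, rfl⟩
    · exact ⟨_, Or.inl ⟨Classical.arbitrary X, rfl⟩, by simp⟩
    · exact ⟨_, Or.inr ⟨y, rfl⟩, prod_mono (subset_univ A) subset_rfl⟩

lemma mem_rectFam_diff_fatFam_of_subset [Nonempty X] {S C : Set (X × Y)}
    (hS : S ∈ rectFam X Y \ fatFam X Y) (hCS : C ⊆ S) : C ∈ rectFam X Y \ fatFam X Y := by
  obtain ⟨L, hL, hSL⟩ := (mem_fatFam_or_exists_line hS.1).resolve_left hS.2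
  exact ⟨mem_rectFam_of_subset_line hL (hCS.trans hSL),
    fun hC => not_subset_line_of_mem_fatFam hC hL (hCS.trans hSL)⟩

lemma insert_notMem_rectFam {A : Set X} {B : Set Y} {p : X × Y} (hp : p ∉ A ×ˢ B)
    (hA : ∃ a ∈ A, a ≠ p.1) (hB : ∃ b ∈ B, b ≠ p.2) : insert p (A ×ˢ B) ∉ rectFam X Y := by
  obtain ⟨a, ha, hap⟩ := hA
  obtain ⟨b, hb, hbp⟩ := hB
  intro h
  have hp₁ := mem_rectFam_iff.mp h p (mem_insert p _) (a, b) (mem_insert_of_mem p ⟨ha, hb⟩)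
  have hp₂ := mem_rectFam_iff.mp h (a, b) (mem_insert_of_mem p ⟨ha, hb⟩) p (mem_insert p _)
  rcases hp₁ with h₁ | h₁
  · exact hbp (congrArg Prod.snd h₁)
  rcases hp₂ with h₂ | h₂
  · exact hap (congrArg Prod.fst h₂)
  exact hp ⟨h₁.1, h₂.2⟩

lemma diff_singleton_notMem_rectFam {A : Set X} {B : Set Y} {p : X × Y}
    (hA : ∃ a ∈ A, a ≠ p.1) (hB : ∃ b ∈ B, b ≠ p.2) (hp : p ∈ A ×ˢ B) :
    A ×ˢ B \ {p} ∉ rectFam X Y := by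
  obtain ⟨a, ha, hap⟩ := hA
  obtain ⟨b, hb, hbp⟩ := hB
  intro h
  have hpb : (p.1, b) ∈ A ×ˢ B \ {p} :=
    ⟨⟨hp.1, hb⟩, fun he => hbp (congrArg Prod.snd he)⟩
  have hap' : (a, p.2) ∈ A ×ˢ B \ {p} :=
    ⟨⟨ha, hp.2⟩, fun he => hap (congrArg Prod.fst he)⟩
  exact (mem_rectFam_iff.mp h _ hpb _ hap').2 rfl

lemma isUpperRigid_rectFam [Nontrivial X] [Nontrivial Y] {R : Set (X × Y)}
    (hR : R ∈ fatFam X Y ∪ lineFam X Y) : IsUpperRigid (rectFam X Y) R := by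
  refine isUpperRigid_of_forall_insert fun p hp => ?_
  rcases hR with ⟨A, hA, B, hB, rfl⟩ | ⟨x, rfl⟩ | ⟨y, rfl⟩
  · exact insert_notMem_rectFam hp (hA.exists_ne p.1) (hB.exists_ne p.2)
  · have hpx : x ≠ p.1 := fun h => hp ⟨h.symm, trivial⟩
    exact insert_notMem_rectFam hp ⟨x, rfl, hpx⟩ (by simpa using exists_ne p.2)
  · have hpy : y ≠ p.2 := fun h => hp ⟨trivial, h.symm⟩
    exact insert_notMem_rectFam hp (by simpa using exists_ne p.1) ⟨y, rfl, hpy⟩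

lemma isLowerRigid_rectFam {R : Set (X × Y)} (hR : R ∈ insert ∅ (fatFam X Y)) :
    IsLowerRigid (rectFam X Y) R := by
  rcases hR with rfl | ⟨A, hA, B, hB, rfl⟩
  · exact isLowerRigid_empty
  · exact isLowerRigid_of_forall_diff_singleton fun p hp =>
      diff_singleton_notMem_rectFam (hA.exists_ne p.1) (hB.exists_ne p.2) hp

lemma cylDim_rectFam_le [Nonempty X] :
    cylDim (rectFam X Y) ≤ (fatFam X Y).encard + (lineFam X Y).encard := by
  let 𝕀 := (fun R => Icc R R) '' fatFam X Y ∪ Icc ∅ '' lineFam X Y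
  have hint : ∀ J ∈ 𝕀, IsIntervalFam J := by
    rintro _ (⟨R, -, rfl⟩ | ⟨L, -, rfl⟩)
    · exact ⟨R, R, subset_rfl, rfl⟩
    · exact ⟨∅, L, empty_subset L, rfl⟩
  have hcover : ⋃₀ 𝕀 = rectFam X Y := by
    refine subset_antisymm (sUnion_subset ?_) fun P hP => ?_
    · rintro _ (⟨R, hR, rfl⟩ | ⟨L, hL, rfl⟩) C hC
      · rw [subset_antisymm hC.2 hC.1]
        exact fatFam_subset_rectFam hR
      · exact mem_rectFam_of_subset_line hL hC.2
    · rcases mem_fatFam_or_exists_line hP with hfat | ⟨L, hL, hPL⟩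
      · exact ⟨_, Or.inl ⟨P, hfat, rfl⟩, left_mem_Icc.mpr subset_rfl⟩
      · exact ⟨_, Or.inr ⟨L, hL, rfl⟩, empty_subset P, hPL⟩
  exact sInf_le_of_le ⟨𝕀, hint, hcover, rfl⟩
    (encard_union_le _ _ |>.trans (add_le_add (encard_image_le _ _) (encard_image_le _ _)))

end Rectangles

section Counting

lemma encard_setOf_subsingleton (α : Type*) [Fintype α] :
    {A : Set α | A.Subsingleton}.encard = Fintype.card α + 1 := by
  have h : {A : Set α | A.Subsingleton} = insert ∅ (range singleton) := by
    ext A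
    simp [subsingleton_iff_eq_empty_or_singleton, eq_comm]
  rw [h, encard_insert_of_notMem (by rintro ⟨a, ha⟩; exact singleton_ne_empty a ha),
    ← image_univ, singleton_injective.encard_image, encard_univ, ENat.card_eq_coe_fintype_card]

lemma encard_setOf_nontrivial (α : Type*) [Fintype α] :
    {A : Set α | A.Nontrivial}.encard = (2 ^ Fintype.card α - Fintype.card α - 1 : ℕ) := by
  have h := encard_add_encard_compl {A : Set α | A.Subsingleton}
  rw [encard_univ, ENat.card_eq_coe_fintype_card, Fintype.card_set,
    encard_setOf_subsingleton] at h
  have hcompl : {A : Set α | A.Subsingleton}ᶜ = {A : Set α | A.Nontrivial} := by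
    ext A
    simp [not_subsingleton_iff]
  obtain ⟨k, hk⟩ := ENat.ne_top_iff_exists.mp (toFinite {A : Set α | A.Nontrivial}).encard_lt_top.ne
  rw [hcompl, ← hk] at h
  rw [← hk]
  have hlt := Nat.lt_two_pow_self (n := Fintype.card α)
  norm_cast at h ⊢
  omega

variable (X Y : Type*) [Fintype X] [Fintype Y]

lemma encard_fatFam : (fatFam X Y).encard =
    ((2 ^ Fintype.card X - Fintype.card X - 1) *
      (2 ^ Fintype.card Y - Fintype.card Y - 1) : ℕ) := by
  have hinj : InjOn (fun p : Set X × Set Y => p.1 ×ˢ p.2)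
      ({A : Set X | A.Nontrivial} ×ˢ {B : Set Y | B.Nontrivial}) := by
    rintro ⟨A, B⟩ ⟨hA, hB⟩ ⟨A', B'⟩ - h
    obtain ⟨rfl, rfl⟩ := (prod_eq_prod_iff_of_nonempty (hA.nonempty.prod hB.nonempty)).mp h
    rfl
  rw [fatFam, ← image_prod, hinj.encard_image, encard_prod, encard_setOf_nontrivial,
    encard_setOf_nontrivial, Nat.cast_mul]

lemma encard_lineFam [Nontrivial X] [Nontrivial Y] :
    (lineFam X Y).encard = Fintype.card X + Fintype.card Y := by
  have hrow : Function.Injective fun x : X => {x} ×ˢ (univ : Set Y) := fun x x' h => by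
    simpa using (prod_eq_prod_iff_of_nonempty (by simp)).mp h |>.1
  have hcol : Function.Injective fun y : Y => (univ : Set X) ×ˢ {y} := fun y y' h => by
    simpa using (prod_eq_prod_iff_of_nonempty (by simp)).mp h |>.2
  have hdisj : Disjoint (range fun x : X => {x} ×ˢ (univ : Set Y))
      (range fun y : Y => (univ : Set X) ×ˢ {y}) := by
    rw [disjoint_left]
    rintro _ ⟨x, rfl⟩ ⟨y, h⟩
    obtain ⟨x', hx'⟩ := exists_ne x
    exact hx' (eq_univ_iff_forall.mp ((prod_eq_prod_iff_of_nonempty (by simp)).mp h).1.symm x')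
  rw [lineFam, encard_union_eq hdisj, ← image_univ, ← image_univ, hrow.encard_image,
    hcol.encard_image, encard_univ, encard_univ, ENat.card_eq_coe_fintype_card,
    ENat.card_eq_coe_fintype_card]

end Counting

theorem stmt16 {X Y : Type*} [Fintype X] [Fintype Y]
    (hX : 2 ≤ Fintype.card X) (hY : 2 ≤ Fintype.card Y) :
    upperDim (rectFam X Y) =
      (((2 ^ Fintype.card X - Fintype.card X - 1) * (2 ^ Fintype.card Y - Fintype.card Y - 1)
        + Fintype.card X + Fintype.card Y : ℕ) : ℕ∞) ∧
    cylDim (rectFam X Y) =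
      (((2 ^ Fintype.card X - Fintype.card X - 1) * (2 ^ Fintype.card Y - Fintype.card Y - 1)
        + Fintype.card X + Fintype.card Y : ℕ) : ℕ∞) ∧
    dualDim (rectFam X Y) =
      (((2 ^ Fintype.card X - Fintype.card X - 1) * (2 ^ Fintype.card Y - Fintype.card Y - 1)
        + 1 : ℕ) : ℕ∞) := by
  have : Nontrivial X := Fintype.one_lt_card_iff_nontrivial.mp hX
  have : Nontrivial Y := Fintype.one_lt_card_iff_nontrivial.mp hY
  have hunion := encard_union_eq (disjoint_fatFam_lineFam (X := X) (Y := Y))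
  have hupper : (fatFam X Y ∪ lineFam X Y).encard ≤ upperDim (rectFam X Y) :=
    encard_le_upperDim (union_subset fatFam_subset_rectFam lineFam_subset_rectFam)
      fun _ hR => isUpperRigid_rectFam hR
  have hcyl : cylDim (rectFam X Y) ≤ (fatFam X Y ∪ lineFam X Y).encard :=
    hunion ▸ cylDim_rectFam_le
  have hdual_le : dualDim (rectFam X Y) ≤ (insert ∅ (fatFam X Y)).encard :=
    dualDim_le_encard_insert_empty fatFam_subset_rectFam
      ⟨empty_mem_rectFam, empty_notMem_fatFam⟩ fun _ hS _ => mem_rectFam_diff_fatFam_of_subset hS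
  have hdual_ge : (insert ∅ (fatFam X Y)).encard ≤ dualDim (rectFam X Y) :=
    encard_le_dualDim (insert_subset empty_mem_rectFam fatFam_subset_rectFam)
      fun _ hR => isLowerRigid_rectFam hR
  rw [hunion, encard_fatFam, encard_lineFam] at hupper hcyl
  rw [encard_insert_of_notMem empty_notMem_fatFam, encard_fatFam] at hdual_le hdual_ge
  simp only [Nat.cast_add, Nat.cast_one, add_assoc]
  exact ⟨le_antisymm (upperDim_le_cylDim.trans hcyl) hupper,
    le_antisymm hcyl (hupper.trans upperDim_le_cylDim), le_antisymm hdual_le hdual_ge⟩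
end

section
/- Let Δ_ℛ : 𝒫(𝒫(X))^n → 𝒫(𝒫(Y)) be a Kripke operator (X, Y finite) that weakly preserves dominated convexity, i.e., whenever each 𝒜_i is dominated and convex, Δ_ℛ(𝒜_0,…,𝒜_{n−1}) is either empty or dominated and convex. Then DD(Δ_ℛ(𝒜_0,…,𝒜_{n−1})) ≤ DD(𝒜_0) · … · DD(𝒜_{n−1}) for all families 𝒜_0,…,𝒜_{n−1}. -/
/-!
Take minimal dominating subfamilies `𝒢ᵢ ⊆ 𝒜ᵢ` with their dominated convex pieces `𝒟ᵢ(G)`.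
The Kripke operator distributes over unions in each argument, so `Δ_ℛ(𝒜)` is the union, over
all choices `g ∈ ∏ᵢ 𝒢ᵢ`, of `Δ_ℛ(𝒟₀(g₀), …, 𝒟ₙ₋₁(gₙ₋₁))`; by hypothesis each of these is
empty or dominated and convex. Pieces of such a cover that share their union merge into a single
dominated convex piece, so `Δ_ℛ(𝒜)` is dominated by at most `∏ᵢ |𝒢ᵢ|` sets.
-/

open Set

theorem ENat.card_pi {ι : Type*} [Fintype ι] (β : ι → Type*) :
    ENat.card (∀ i, β i) = ∏ i, ENat.card (β i) := by
  simp only [ENat.card, Cardinal.mk_pi, Cardinal.prod_eq_of_fintype, map_prod,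
    Cardinal.toENat_lift]

section Families

variable {X : Type*}

lemma dominatesFam_self (𝒜 : Set (Set X)) : DominatesFam 𝒜 𝒜 := by
  refine ⟨Subset.rfl, fun A => ({A} : Set (Set X)), fun A hA => ?_, by simp⟩
  refine ⟨singleton_subset_iff.mpr hA, ?_, by simp [IsDominatedFam], sUnion_singleton A⟩
  rintro S rfl T rfl C hSC hCT
  exact Subset.antisymm hCT hSC

lemma DominatesFam.upperDim_le {𝒢 𝒜 : Set (Set X)} (h : DominatesFam 𝒢 𝒜) :
    upperDim 𝒜 ≤ 𝒢.encard :=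
  sInf_le ⟨𝒢, h, rfl⟩

lemma exists_dominatesFam_encard_eq_upperDim (𝒜 : Set (Set X)) :
    ∃ 𝒢 : Set (Set X), DominatesFam 𝒢 𝒜 ∧ 𝒢.encard = upperDim 𝒜 :=
  csInf_mem (s := {n | ∃ 𝒢 : Set (Set X), DominatesFam 𝒢 𝒜 ∧ 𝒢.encard = n})
    ⟨_, 𝒜, dominatesFam_self 𝒜, rfl⟩

section CommonUnion

variable {κ : Type*} {𝒞 : κ → Set (Set X)} {G : Set X}

lemma isConvexFam_iUnion_of_sUnion_eq (hdom : ∀ j, IsDominatedFam (𝒞 j))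
    (hconv : ∀ j, IsConvexFam (𝒞 j)) (hG : ∀ j, ⋃₀ 𝒞 j = G) : IsConvexFam (⋃ j, 𝒞 j) := by
  simp only [IsConvexFam, mem_iUnion]
  rintro S ⟨j, hS⟩ T ⟨k, hT⟩ C hSC hCT
  have hCG : C ⊆ G := hCT.trans (hG k ▸ subset_sUnion_of_mem hT)
  exact ⟨j, hconv j S hS G (hG j ▸ hdom j) C hSC hCG⟩

lemma sUnion_iUnion_of_sUnion_eq [Nonempty κ] (hG : ∀ j, ⋃₀ 𝒞 j = G) :
    ⋃₀ (⋃ j, 𝒞 j) = G := by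
  simp [sUnion_iUnion, hG, iUnion_const]

lemma isDominatedFam_iUnion_of_sUnion_eq [Nonempty κ] (hdom : ∀ j, IsDominatedFam (𝒞 j))
    (hG : ∀ j, ⋃₀ 𝒞 j = G) : IsDominatedFam (⋃ j, 𝒞 j) := by
  let j := Classical.arbitrary κ
  rw [IsDominatedFam, sUnion_iUnion_of_sUnion_eq hG]
  exact mem_iUnion_of_mem j (hG j ▸ hdom j)

end CommonUnion

lemma dominatesFam_range_sUnion {ι : Type*} {𝒜 : Set (Set X)} {𝒞 : ι → Set (Set X)}
    (hdc : ∀ j, IsDominatedFam (𝒞 j) ∧ IsConvexFam (𝒞 j)) (hcover : ⋃ j, 𝒞 j = 𝒜) :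
    DominatesFam (range fun j => ⋃₀ 𝒞 j) 𝒜 := by
  have hsub : ∀ j, 𝒞 j ⊆ 𝒜 := fun j => hcover ▸ subset_iUnion 𝒞 j
  refine ⟨range_subset_iff.mpr fun j => hsub j (hdc j).1,
    fun G => ⋃ k : {k // ⋃₀ 𝒞 k = G}, 𝒞 k, ?_, ?_⟩
  · rintro _ ⟨j, rfl⟩
    have : Nonempty {k // ⋃₀ 𝒞 k = ⋃₀ 𝒞 j} := ⟨⟨j, rfl⟩⟩
    exact ⟨iUnion_subset fun k => hsub k,
      isConvexFam_iUnion_of_sUnion_eq (fun k => (hdc k).1) (fun k => (hdc k).2) Subtype.prop,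
      isDominatedFam_iUnion_of_sUnion_eq (fun k => (hdc k).1) Subtype.prop,
      sUnion_iUnion_of_sUnion_eq Subtype.prop⟩
  · rw [biUnion_range, ← hcover]
    refine Subset.antisymm (iUnion_subset fun j => iUnion_subset fun k => subset_iUnion 𝒞 k) ?_
    exact iUnion_subset fun j => subset_iUnion_of_subset j (subset_iUnion_of_subset ⟨j, rfl⟩ le_rfl)

lemma upperDim_le_of_iUnion_eq {ι : Type*} {𝒜 : Set (Set X)} {𝒞 : ι → Set (Set X)}
    (hdc : ∀ j, 𝒞 j = ∅ ∨ (IsDominatedFam (𝒞 j) ∧ IsConvexFam (𝒞 j)))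
    (hcover : ⋃ j, 𝒞 j = 𝒜) : upperDim 𝒜 ≤ ENat.card ι := by
  let 𝒞' : {j // (𝒞 j).Nonempty} → Set (Set X) := fun j => 𝒞 j
  have hdc' : ∀ j, IsDominatedFam (𝒞' j) ∧ IsConvexFam (𝒞' j) := fun j =>
    (hdc j).resolve_left j.2.ne_empty
  have hcover' : ⋃ j, 𝒞' j = 𝒜 := by
    rw [← hcover]
    refine Subset.antisymm (iUnion_subset fun j => subset_iUnion 𝒞 j) ?_
    exact iUnion_subset fun j A hA => mem_iUnion_of_mem ⟨j, A, hA⟩ hA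
  calc upperDim 𝒜 ≤ (range fun j => ⋃₀ 𝒞' j).encard :=
        (dominatesFam_range_sUnion hdc' hcover').upperDim_le
    _ ≤ ENat.card {j // (𝒞 j).Nonempty} := by
        rw [← image_univ, ← encard_univ]; exact encard_image_le _ _
    _ ≤ ENat.card ι := ENat.card_le_card_of_injective Subtype.val_injective

end Families

lemma kripkeOp_iUnion {X Y : Type*} {n : ℕ} (ℛ : Set (Set Y × (Fin n → Set X)))
    {κ : Fin n → Type*} (𝒞 : ∀ i, κ i → Set (Set X)) :
    kripkeOp ℛ (fun i => ⋃ j, 𝒞 i j) = ⋃ g : ∀ i, κ i, kripkeOp ℛ (fun i => 𝒞 i (g i)) := by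
  ext B
  simp only [kripkeOp, mem_iUnion, mem_ofPred_eq, Classical.skolem (p := fun i j => _ ∈ 𝒞 i j)]
  constructor
  · rintro ⟨A, ⟨g, hA⟩, hR⟩
    exact ⟨g, A, hA, hR⟩
  · rintro ⟨g, A, hA, hR⟩
    exact ⟨A, ⟨g, hA⟩, hR⟩

theorem stmt19_general {X Y : Type*} {n : ℕ}
    (ℛ : Set (Set Y × (Fin n → Set X)))
    (hpres : ∀ 𝒜 : Fin n → Set (Set X),
      (∀ i, IsDominatedFam (𝒜 i) ∧ IsConvexFam (𝒜 i)) →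
      kripkeOp ℛ 𝒜 = ∅ ∨
        (IsDominatedFam (kripkeOp ℛ 𝒜) ∧ IsConvexFam (kripkeOp ℛ 𝒜)))
    (𝒜 : Fin n → Set (Set X)) :
    upperDim (kripkeOp ℛ 𝒜) ≤ ∏ i, upperDim (𝒜 i) := by
  choose 𝒢 hdom hcard using fun i => exists_dominatesFam_encard_eq_upperDim (𝒜 i)
  choose 𝒟 h𝒟 hcover using fun i => (hdom i).2
  have h𝒜 : 𝒜 = fun i => ⋃ G : 𝒢 i, 𝒟 i G :=
    funext fun i => by rw [← hcover i, biUnion_eq_iUnion]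
  calc upperDim (kripkeOp ℛ 𝒜) ≤ ENat.card (∀ i, 𝒢 i) := by
        refine upperDim_le_of_iUnion_eq (𝒞 := fun g => kripkeOp ℛ fun i => 𝒟 i (g i))
          (fun g => hpres _ fun i => ?_) ?_
        · obtain ⟨-, hconv, hdom, -⟩ := h𝒟 i _ (g i).2
          exact ⟨hdom, hconv⟩
        · rw [h𝒜, kripkeOp_iUnion]
    _ = ∏ i, upperDim (𝒜 i) := by
        rw [ENat.card_pi]
        exact Finset.prod_congr rfl fun i _ => hcard i

theorem stmt19 {X Y : Type*} [Finite X] [Finite Y] {n : ℕ}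
    (ℛ : Set (Set Y × (Fin n → Set X)))
    (hpres : ∀ 𝒜 : Fin n → Set (Set X),
      (∀ i, IsDominatedFam (𝒜 i) ∧ IsConvexFam (𝒜 i)) →
      kripkeOp ℛ 𝒜 = ∅ ∨
        (IsDominatedFam (kripkeOp ℛ 𝒜) ∧ IsConvexFam (kripkeOp ℛ 𝒜)))
    (𝒜 : Fin n → Set (Set X)) :
    upperDim (kripkeOp ℛ 𝒜) ≤ ∏ i, upperDim (𝒜 i) :=
  stmt19_general ℛ hpres 𝒜
end
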